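/- Suppose the data (C,c) is pseudo-parallel with value φ ∈ ℝ and φ ≠ 0. Then Q(X,Y,V,W,Z) = Q(X,Y,V,Z,W) for all X,Y,V,W,Z ∈ E; that is, the scalar component ⟨Q(g,h)(X,Y,V,W), JZ⟩ is symmetric in W and Z. -/

import Mathlib

/-!
By the Gauss equation each `R X Y` is skew-adjoint, so `P X Y` is the action of a skew
endomorphism on the cubic form, which is symmetric in its last two slots whenever `C` is.
Pseudo-parallelity gives `φ • Q = -P`, and `φ ≠ 0` transfers the symmetry to `Q`.
-/

open RealInnerProductSpace

section

variable {E : Type*} [NormedAddCommGroup E] [InnerProductSpace ℝ E]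

theorem inner_apply_comm_of_cubic_form (C : E →ₗ[ℝ] E →ₗ[ℝ] E →ₗ[ℝ] ℝ)
    (hC : ∀ X Y Z : E, C X Y Z = C X Z Y) (A : E → E → E)
    (hA : ∀ X Y Z : E, ⟪A X Y, Z⟫ = C X Y Z) (X u v : E) :
    ⟪A X u, v⟫ = ⟪u, A X v⟫ := by
  rw [hA, real_inner_comm, hA, hC]

theorem inner_gauss_curvature_skew (A : E → E → E)
    (hA : ∀ X u v : E, ⟪A X u, v⟫ = ⟪u, A X v⟫) (c : ℝ) (R : E → E → E → E)
    (hR : ∀ X Y Z : E, R X Y Z = c • (⟪Y, Z⟫ • X - ⟪X, Z⟫ • Y) + A X (A Y Z) - A Y (A X Z))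
    (X Y u v : E) :
    ⟪R X Y u, v⟫ = -⟪u, R X Y v⟫ := by
  simp only [hR, inner_add_left, inner_sub_left, real_inner_smul_left,
    inner_add_right, inner_sub_right, real_inner_smul_right]
  have hAA : ∀ X Y : E, ⟪A X (A Y u), v⟫ = ⟪u, A Y (A X v)⟫ := fun X Y => by rw [hA, hA]
  rw [hAA X Y, hAA Y X, real_inner_comm u X, real_inner_comm u Y]
  ring

/-- Since `⟪S (A V W), Z⟫ = -C V W (S Z)`, both sides equal
`-(C (S V) W Z + C V (S W) Z + C V W (S Z))`. -/
theorem inner_skew_apply_sub_cubic_comm (C : E →ₗ[ℝ] E →ₗ[ℝ] E →ₗ[ℝ] ℝ)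
    (hC : ∀ X Y Z : E, C X Y Z = C X Z Y) (A : E → E → E)
    (hA : ∀ X Y Z : E, ⟪A X Y, Z⟫ = C X Y Z) (S : E → E)
    (hS : ∀ u v : E, ⟪S u, v⟫ = -⟪u, S v⟫) (V W Z : E) :
    ⟪S (A V W), Z⟫ - C (S V) W Z - C V (S W) Z
      = ⟪S (A V Z), W⟫ - C (S V) Z W - C V (S Z) W := by
  rw [hS, hS, hA, hA, hC V W (S Z), hC (S V) W Z, hC V (S W) Z]
  ring

end

theorem Q_symmetric_in_last_two_of_pseudo_parallel_general
    {E : Type*} [NormedAddCommGroup E] [InnerProductSpace ℝ E]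
    (C : E →ₗ[ℝ] E →ₗ[ℝ] E →ₗ[ℝ] ℝ)
    (hC2 : ∀ X Y Z : E, C X Y Z = C X Z Y)
    (A : E → E → E)
    (hA : ∀ X Y Z : E, ⟪A X Y, Z⟫ = C X Y Z)
    (c : ℝ) (R : E → E → E → E)
    (hR : ∀ X Y Z : E, R X Y Z = c • (⟪Y, Z⟫ • X - ⟪X, Z⟫ • Y) + A X (A Y Z) - A Y (A X Z))
    (P : E → E → E → E → E → ℝ)
    (hP : ∀ X Y V W Z : E, P X Y V W Z
      = ⟪R X Y (A V W), Z⟫ - C (R X Y V) W Z - C V (R X Y W) Z)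
    (Q : E → E → E → E → E → ℝ)
    (φ : ℝ)
    (hpp : ∀ X Y V W Z : E, P X Y V W Z + φ * Q X Y V W Z = 0)
    (hφ : φ ≠ 0) :
    ∀ X Y V W Z : E, Q X Y V W Z = Q X Y V Z W := by
  intro X Y V W Z
  have hR_skew := inner_gauss_curvature_skew A (inner_apply_comm_of_cubic_form C hC2 A hA) c R hR
  have hP_comm : P X Y V W Z = P X Y V Z W := by
    rw [hP, hP]
    exact inner_skew_apply_sub_cubic_comm C hC2 A hA (R X Y) (hR_skew X Y) V W Z
  apply mul_left_cancel₀ hφ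
  linarith [hpp X Y V W Z, hpp X Y V Z W]

theorem Q_symmetric_in_last_two_of_pseudo_parallel
    {E : Type*} [NormedAddCommGroup E] [InnerProductSpace ℝ E] [FiniteDimensional ℝ E]
    (C : E →ₗ[ℝ] E →ₗ[ℝ] E →ₗ[ℝ] ℝ)
    (hC1 : ∀ X Y Z : E, C X Y Z = C Y X Z)
    (hC2 : ∀ X Y Z : E, C X Y Z = C X Z Y)
    (A : E → E → E)
    (hA : ∀ X Y Z : E, ⟪A X Y, Z⟫ = C X Y Z)
    (c : ℝ) (R : E → E → E → E)
    (hR : ∀ X Y Z : E, R X Y Z = c • (⟪Y, Z⟫ • X - ⟪X, Z⟫ • Y) + A X (A Y Z) - A Y (A X Z))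
    (P : E → E → E → E → E → ℝ)
    (hP : ∀ X Y V W Z : E, P X Y V W Z
      = ⟪R X Y (A V W), Z⟫ - C (R X Y V) W Z - C V (R X Y W) Z)
    (Q : E → E → E → E → E → ℝ)
    (hQ : ∀ X Y V W Z : E, Q X Y V W Z
      = ⟪Y, V⟫ * C X W Z - ⟪X, V⟫ * C Y W Z + ⟪Y, W⟫ * C X V Z - ⟪X, W⟫ * C Y V Z)
    (φ : ℝ)
    (hpp : ∀ X Y V W Z : E, P X Y V W Z + φ * Q X Y V W Z = 0)
    (hφ : φ ≠ 0) :
    ∀ X Y V W Z : E, Q X Y V W Z = Q X Y V Z W :=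
  Q_symmetric_in_last_two_of_pseudo_parallel_general C hC2 A hA c R hR P hP Q φ hpp hφ
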